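/- If the algebra extension A over C is right depth two and the extension C over B is H-separable, then A over B is right depth two. -/
import Mathlib


open TensorProduct LinearMap

noncomputable section

variable {K : Type*} [CommRing K] {A B : Type*} [Ring A] [Ring B] [Algebra K A] [Algebra K B]

/-- Left multiplication by `a` on the first tensorand of `A ⊗[K] A`. -/
def lmulT (a : A) : A ⊗[K] A →ₗ[K] A ⊗[K] A := rTensor A (mulLeft K a)

/-- Right multiplication by `a` on the second tensorand of `A ⊗[K] A`. -/
def rmulT (a : A) : A ⊗[K] A →ₗ[K] A ⊗[K] A := lTensor A (mulRight K a)

/-- The relations defining `A ⊗_B A` as a quotient of `A ⊗[K] A`; working modulo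
`relJ f` amounts to working in the tensor square `A ⊗_B A` of the extension `f`. -/
def relJ (f : B →ₐ[K] A) : Submodule K (A ⊗[K] A) :=
  Submodule.span K {z | ∃ x b y, z = (x * f b) ⊗ₜ[K] y - x ⊗ₜ[K] (f b * y)}

/-- `α` is a `B`-`B`-bimodule endomorphism of `A`. -/
def IsBB (f : B →ₐ[K] A) (α : A →ₗ[K] A) : Prop :=
  (∀ b x, α (f b * x) = f b * α x) ∧ (∀ b x, α (x * f b) = α x * f b)

/-- `t` represents a `B`-central element of `A ⊗_B A`. -/
def IsCent (f : B →ₐ[K] A) (t : A ⊗[K] A) : Prop :=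
  ∀ b, lmulT (K := K) (f b) t - rmulT (f b) t ∈ relJ f

/-- `A ⊗_B A` is isomorphic, as a `B`-`A`-bimodule, to a direct summand of `A^N`
for some positive `N`: there is a split mono `ι` (with splitting `π`), both maps
being `B`-`A`-bimodule maps (everything taken modulo the relations `relJ f`). -/
def LeftD2 (f : B →ₐ[K] A) : Prop :=
  ∃ N : ℕ, 0 < N ∧ ∃ (ι : A ⊗[K] A →ₗ[K] (Fin N → A)) (π : (Fin N → A) →ₗ[K] A ⊗[K] A),
    (∀ z ∈ relJ f, ι z = 0) ∧
    (∀ b z, ι (lmulT (f b) z) = fun i => f b * ι z i) ∧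
    (∀ a z, ι (rmulT a z) = fun i => ι z i * a) ∧
    (∀ b (v : Fin N → A), π (fun i => f b * v i) - lmulT (f b) (π v) ∈ relJ f) ∧
    (∀ a (v : Fin N → A), π (fun i => v i * a) - rmulT a (π v) ∈ relJ f) ∧
    (∀ z, π (ι z) - z ∈ relJ f)

/-- `A ⊗_B A` is isomorphic, as an `A`-`B`-bimodule, to a direct summand of `A^N`. -/
def RightD2 (f : B →ₐ[K] A) : Prop :=
  ∃ N : ℕ, 0 < N ∧ ∃ (ι : A ⊗[K] A →ₗ[K] (Fin N → A)) (π : (Fin N → A) →ₗ[K] A ⊗[K] A),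
    (∀ z ∈ relJ f, ι z = 0) ∧
    (∀ a z, ι (lmulT a z) = fun i => a * ι z i) ∧
    (∀ b z, ι (rmulT (f b) z) = fun i => ι z i * f b) ∧
    (∀ a (v : Fin N → A), π (fun i => a * v i) - lmulT a (π v) ∈ relJ f) ∧
    (∀ b (v : Fin N → A), π (fun i => v i * f b) - rmulT (f b) (π v) ∈ relJ f) ∧
    (∀ z, π (ι z) - z ∈ relJ f)

/-- `A ⊗_B A` is isomorphic, as an `A`-`A`-bimodule, to a direct summand of `A^N`:
H-separability of the extension `f`. -/
def HSep (f : B →ₐ[K] A) : Prop :=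
  ∃ N : ℕ, 0 < N ∧ ∃ (ι : A ⊗[K] A →ₗ[K] (Fin N → A)) (π : (Fin N → A) →ₗ[K] A ⊗[K] A),
    (∀ z ∈ relJ f, ι z = 0) ∧
    (∀ a z, ι (lmulT a z) = fun i => a * ι z i) ∧
    (∀ a z, ι (rmulT a z) = fun i => ι z i * a) ∧
    (∀ a (v : Fin N → A), π (fun i => a * v i) - lmulT a (π v) ∈ relJ f) ∧
    (∀ a (v : Fin N → A), π (fun i => v i * a) - rmulT a (π v) ∈ relJ f) ∧
    (∀ z, π (ι z) - z ∈ relJ f)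


section Aux

variable {C : Type*} [Ring C] [Algebra K C]

@[simp] lemma lmulT_tmul (a x y : A) :
    lmulT (K := K) a (x ⊗ₜ[K] y) = (a * x) ⊗ₜ[K] y := rfl

@[simp] lemma rmulT_tmul (a x y : A) :
    rmulT (K := K) a (x ⊗ₜ[K] y) = x ⊗ₜ[K] (y * a) := rfl

lemma relJ_gen_mem (f : B →ₐ[K] A) (x y : A) (b : B) :
    (x * f b) ⊗ₜ[K] y - x ⊗ₜ[K] (f b * y) ∈ relJ f :=
  Submodule.subset_span ⟨x, b, y, rfl⟩

/-- The `K`-bilinear action of `C ⊗[K] C` on `A ⊗[K] A` induced by `g`. -/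
def psi0 (g : C →ₐ[K] A) : C ⊗[K] C →ₗ[K] A ⊗[K] A →ₗ[K] A ⊗[K] A :=
  TensorProduct.lift <| LinearMap.mk₂ K
    (fun c c' => rTensor A (mulRight K (g c)) ∘ₗ lTensor A (mulLeft K (g c')))
    (fun c₁ c₂ c' => TensorProduct.ext' fun x y => by
      simp [mul_add, add_tmul])
    (fun k c c' => TensorProduct.ext' fun x y => by
      simp [mul_smul_comm, smul_tmul'])
    (fun c c₁ c₂ => TensorProduct.ext' fun x y => by
      simp [add_mul, tmul_add])
    (fun k c c' => TensorProduct.ext' fun x y => by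
      simp [smul_mul_assoc, tmul_smul])

@[simp] lemma psi0_tmul_tmul (g : C →ₐ[K] A) (c c' : C) (x y : A) :
    psi0 g (c ⊗ₜ[K] c') (x ⊗ₜ[K] y) = (x * g c) ⊗ₜ[K] (g c' * y) := by
  simp [psi0]

lemma psi0_lmulT (g : C →ₐ[K] A) (t : C ⊗[K] C) (a : A) (z : A ⊗[K] A) :
    psi0 g t (lmulT (K := K) a z) = lmulT a (psi0 g t z) := by
  induction t using TensorProduct.induction_on with
  | zero => simp
  | tmul c c' =>
    induction z using TensorProduct.induction_on with
    | zero => simp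
    | tmul x y => simp [mul_assoc]
    | add z₁ z₂ h₁ h₂ => simp only [map_add, h₁, h₂]
  | add t₁ t₂ h₁ h₂ => simp only [map_add, LinearMap.add_apply, h₁, h₂]

lemma psi0_rmulT (g : C →ₐ[K] A) (t : C ⊗[K] C) (a : A) (z : A ⊗[K] A) :
    psi0 g t (rmulT (K := K) a z) = rmulT a (psi0 g t z) := by
  induction t using TensorProduct.induction_on with
  | zero => simp
  | tmul c c' =>
    induction z using TensorProduct.induction_on with
    | zero => simp
    | tmul x y => simp [mul_assoc]
    | add z₁ z₂ h₁ h₂ => simp only [map_add, h₁, h₂]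
  | add t₁ t₂ h₁ h₂ => simp only [map_add, LinearMap.add_apply, h₁, h₂]

lemma psi0_lmulT_left (g : C →ₐ[K] A) (c : C) (t : C ⊗[K] C) (z : A ⊗[K] A) :
    psi0 g (lmulT (K := K) c t) z = psi0 g t (rTensor A (mulRight K (g c)) z) := by
  induction t using TensorProduct.induction_on with
  | zero => simp
  | tmul c₁ c₂ =>
    induction z using TensorProduct.induction_on with
    | zero => simp
    | tmul x y => simp [map_mul, mul_assoc]
    | add z₁ z₂ h₁ h₂ => simp only [map_add, h₁, h₂]
  | add t₁ t₂ h₁ h₂ => simp only [map_add, LinearMap.add_apply, h₁, h₂]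

lemma psi0_rmulT_left (g : C →ₐ[K] A) (c : C) (t : C ⊗[K] C) (z : A ⊗[K] A) :
    psi0 g (rmulT (K := K) c t) z = psi0 g t (lTensor A (mulLeft K (g c)) z) := by
  induction t using TensorProduct.induction_on with
  | zero => simp
  | tmul c₁ c₂ =>
    induction z using TensorProduct.induction_on with
    | zero => simp
    | tmul x y => simp [map_mul, mul_assoc]
    | add z₁ z₂ h₁ h₂ => simp only [map_add, h₁, h₂]
  | add t₁ t₂ h₁ h₂ => simp only [map_add, LinearMap.add_apply, h₁, h₂]

lemma psi0_one_one (g : C →ₐ[K] A) (z : A ⊗[K] A) :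
    psi0 g ((1 : C) ⊗ₜ[K] (1 : C)) z = z := by
  induction z using TensorProduct.induction_on with
  | zero => simp
  | tmul x y => simp
  | add z₁ z₂ h₁ h₂ => simp only [map_add, h₁, h₂]

lemma psi0_mem_relJ (f : B →ₐ[K] C) (g : C →ₐ[K] A) {s : C ⊗[K] C}
    (hs : s ∈ relJ f) (z : A ⊗[K] A) : psi0 g s z ∈ relJ (g.comp f) := by
  have h : relJ f ≤ Submodule.comap ((psi0 g).flip z) (relJ (g.comp f)) := by
    refine Submodule.span_le.mpr ?_
    rintro _ ⟨x₀, b, y₀, rfl⟩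
    simp only [SetLike.mem_coe, Submodule.mem_comap, LinearMap.flip_apply, map_sub,
      LinearMap.sub_apply]
    induction z using TensorProduct.induction_on with
    | zero => simpa using (relJ (g.comp f)).zero_mem
    | tmul x y =>
      simpa [map_mul, mul_assoc] using
        relJ_gen_mem (g.comp f) (x * g x₀) (g y₀ * y) b
    | add z₁ z₂ h₁ h₂ =>
      have := Submodule.add_mem _ h₁ h₂
      simpa [map_add, sub_add_sub_comm] using this
  exact h hs

lemma psi0_central_mem (f : B →ₐ[K] C) (g : C →ₐ[K] A) {t : C ⊗[K] C}
    (ht : ∀ c : C, lmulT (K := K) c t - rmulT c t ∈ relJ f) {w : A ⊗[K] A}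
    (hw : w ∈ relJ g) : psi0 g t w ∈ relJ (g.comp f) := by
  have h : relJ g ≤ Submodule.comap (psi0 g t) (relJ (g.comp f)) := by
    refine Submodule.span_le.mpr ?_
    rintro _ ⟨x, c, y, rfl⟩
    simp only [SetLike.mem_coe, Submodule.mem_comap, map_sub]
    have e1 : psi0 g t ((x * g c) ⊗ₜ[K] y) = psi0 g (lmulT (K := K) c t) (x ⊗ₜ[K] y) := by
      rw [psi0_lmulT_left, rTensor_tmul, LinearMap.mulRight_apply]
    have e2 : psi0 g t (x ⊗ₜ[K] (g c * y)) = psi0 g (rmulT (K := K) c t) (x ⊗ₜ[K] y) := by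
      rw [psi0_rmulT_left, lTensor_tmul, LinearMap.mulLeft_apply]
    rw [e1, e2, ← LinearMap.sub_apply, ← map_sub]
    exact psi0_mem_relJ f g (ht c) _
  exact h hw

lemma rTensor_mem_relJ (f : B →ₐ[K] C) (g : C →ₐ[K] A) (c : C)
    (hc : ∀ b, f b * c = c * f b) {z : A ⊗[K] A} (hz : z ∈ relJ (g.comp f)) :
    rTensor A (mulRight K (g c)) z ∈ relJ g := by
  have h : relJ (g.comp f) ≤ Submodule.comap (rTensor A (mulRight K (g c))) (relJ g) := by
    refine Submodule.span_le.mpr ?_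
    rintro _ ⟨x, b, y, rfl⟩
    simp only [SetLike.mem_coe, Submodule.mem_comap, map_sub, rTensor_tmul,
      LinearMap.mulRight_apply, AlgHom.comp_apply]
    have key := relJ_gen_mem g (x * g c) y (f b)
    have eq1 : x * g c * g (f b) = x * g (f b) * g c := by
      rw [mul_assoc, mul_assoc, ← map_mul, ← map_mul, hc b]
    rwa [eq1] at key
  exact h hz

lemma rTensor_lmulT (a a' : A) (z : A ⊗[K] A) :
    rTensor A (mulRight K a') (lmulT (K := K) a z) = lmulT a (rTensor A (mulRight K a') z) := by
  induction z using TensorProduct.induction_on with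
  | zero => simp
  | tmul x y => simp [mul_assoc]
  | add z₁ z₂ h₁ h₂ => simp only [map_add, h₁, h₂]

lemma rTensor_rmulT (a a' : A) (z : A ⊗[K] A) :
    rTensor A (mulRight K a') (rmulT (K := K) a z) = rmulT a (rTensor A (mulRight K a') z) := by
  induction z using TensorProduct.induction_on with
  | zero => simp
  | tmul x y => simp
  | add z₁ z₂ h₁ h₂ => simp only [map_add, h₁, h₂]

end Aux

/-- if `A | C` is right depth two and `C | B` is H-separable, then
`A | B` is right depth two. -/
theorem rightD2_of_rightD2_of_hSep {C : Type*} [Ring C] [Algebra K C]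
    (f : B →ₐ[K] C) (g : C →ₐ[K] A)
    (hAC : RightD2 g) (hCB : HSep f) : RightD2 (g.comp f) := by
  classical
  obtain ⟨N, hN, ιA, πA, hA0, hA1, hA2, hA3, hA4, hA5⟩ := hAC
  obtain ⟨M, hM, ιC, πC, hC0, hC1, hC2, hC3, hC4, hC5⟩ := hCB
  set e : Fin M → C := ιC ((1 : C) ⊗ₜ[K] (1 : C)) with he
  set p : Fin M → C ⊗[K] C := fun j => πC (Pi.single j 1) with hpp
  -- each `e j` commutes with the image of `f`
  have hcomm : ∀ (b : B) (j : Fin M), f b * e j = e j * f b := by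
    intro b j
    have hmem : (f b) ⊗ₜ[K] (1 : C) - (1 : C) ⊗ₜ[K] (f b) ∈ relJ f := by
      simpa using relJ_gen_mem f 1 1 b
    have h0 := hC0 _ hmem
    rw [map_sub, sub_eq_zero] at h0
    have h1 := hC1 (f b) ((1 : C) ⊗ₜ[K] (1 : C))
    have h2 := hC2 (f b) ((1 : C) ⊗ₜ[K] (1 : C))
    have e1 : lmulT (K := K) (f b) ((1 : C) ⊗ₜ[K] (1 : C)) = (f b) ⊗ₜ[K] (1 : C) := by simp
    have e2 : rmulT (K := K) (f b) ((1 : C) ⊗ₜ[K] (1 : C)) = (1 : C) ⊗ₜ[K] (f b) := by simp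
    rw [e1] at h1
    rw [e2] at h2
    have h3 := (h1.symm.trans h0).trans h2
    have h4 := congrFun h3 j
    simpa [← he] using h4
  -- each `p j` is fully `C`-central modulo `relJ f`
  have hcent : ∀ (j : Fin M) (c : C),
      lmulT (K := K) c (p j) - rmulT c (p j) ∈ relJ f := by
    intro j c
    have h3 := hC3 c (Pi.single j 1)
    have h4 := hC4 c (Pi.single j 1)
    have hfun : (fun i => c * (Pi.single j 1 : Fin M → C) i) =
        fun i => (Pi.single j 1 : Fin M → C) i * c := by
      funext i
      simp [Pi.single_apply, mul_ite, ite_mul]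
    rw [hfun] at h3
    have h5 := Submodule.sub_mem _ h4 h3
    rw [hpp]
    convert h5 using 1
    abel
  -- the element `∑ j, e j • p j` represents `1 ⊗ 1` in `C ⊗_B C`
  have ht0 : (∑ j : Fin M, lmulT (K := K) (e j) (p j)) - (1 : C) ⊗ₜ[K] (1 : C) ∈ relJ f := by
    have h1 : ∀ j : Fin M, πC (Pi.single j (e j)) - lmulT (K := K) (e j) (p j) ∈ relJ f := by
      intro j
      have h := hC3 (e j) (Pi.single j 1)
      have hf : (fun i => e j * (Pi.single j 1 : Fin M → C) i) =
          (Pi.single j (e j) : Fin M → C) := by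
        funext i
        simp [Pi.single_apply, mul_ite]
      rw [hf] at h
      rw [hpp]
      exact h
    have h2 := hC5 ((1 : C) ⊗ₜ[K] (1 : C))
    have h3 : ∑ j : Fin M, πC (Pi.single j (e j)) = πC (ιC ((1 : C) ⊗ₜ[K] (1 : C))) := by
      rw [← map_sum]
      congr 1
      rw [← he]
      exact Finset.univ_sum_single e
    have h4 := Submodule.sub_mem _ h2
      (Submodule.sum_mem (t := (Finset.univ : Finset (Fin M))) _ fun j _ => h1 j)
    rw [Finset.sum_sub_distrib, h3] at h4
    convert h4 using 1
    abel
  refine ⟨N * M, Nat.mul_pos hN hM,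
    LinearMap.pi fun q => LinearMap.proj (finProdFinEquiv.symm q).1 ∘ₗ ιA ∘ₗ
      rTensor A (mulRight K (g (e (finProdFinEquiv.symm q).2))),
    ∑ j : Fin M, psi0 g (p j) ∘ₗ πA ∘ₗ
      LinearMap.pi fun i => LinearMap.proj (finProdFinEquiv (i, j)),
    ?_, ?_, ?_, ?_, ?_, ?_⟩
  · -- vanishing on `relJ (g.comp f)`
    intro z hz
    funext q
    have h := hA0 _ (rTensor_mem_relJ f g (e (finProdFinEquiv.symm q).2)
      (fun b => hcomm b _) hz)
    simp only [LinearMap.pi_apply, LinearMap.comp_apply, LinearMap.proj_apply, Pi.zero_apply]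
    rw [h]
    rfl
  · -- left `A`-linearity
    intro a z
    funext q
    simp [LinearMap.pi_apply, rTensor_lmulT, hA1]
  · -- right `B`-linearity
    intro b z
    funext q
    simp [LinearMap.pi_apply, AlgHom.comp_apply, rTensor_rmulT, hA2]
  · -- `π` is left `A`-linear modulo relations
    intro a v
    simp only [LinearMap.sum_apply, LinearMap.comp_apply, LinearMap.pi_apply,
      LinearMap.proj_apply]
    rw [map_sum, ← Finset.sum_sub_distrib]
    refine Submodule.sum_mem _ fun j _ => ?_
    rw [← psi0_lmulT, ← map_sub]
    exact psi0_central_mem f g (hcent j) (hA3 a _)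
  · -- `π` is right `B`-linear modulo relations
    intro b v
    simp only [LinearMap.sum_apply, LinearMap.comp_apply, LinearMap.pi_apply,
      LinearMap.proj_apply, AlgHom.comp_apply]
    rw [map_sum, ← Finset.sum_sub_distrib]
    refine Submodule.sum_mem _ fun j _ => ?_
    rw [← psi0_rmulT, ← map_sub]
    exact psi0_central_mem f g (hcent j) (hA4 (f b) _)
  · -- splitting modulo relations
    intro z
    have hrow : ∀ j : Fin M,
        (LinearMap.pi (R := K) fun i : Fin N =>
            LinearMap.proj (R := K) (φ := fun _ : Fin (N * M) => A) (finProdFinEquiv (i, j)))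
          ((LinearMap.pi (R := K) fun q : Fin (N * M) =>
              LinearMap.proj (R := K) (φ := fun _ : Fin N => A) (finProdFinEquiv.symm q).1 ∘ₗ
                ιA ∘ₗ rTensor A (mulRight K (g (e (finProdFinEquiv.symm q).2)))) z) =
          ιA (rTensor A (mulRight K (g (e j))) z) := by
      intro j
      funext i
      simp only [LinearMap.pi_apply, LinearMap.comp_apply, LinearMap.proj_apply,
        Equiv.symm_apply_apply]
    simp only [LinearMap.sum_apply, LinearMap.comp_apply, hrow]
    have key : (∑ j : Fin M,
          psi0 g (p j) (πA (ιA (rTensor A (mulRight K (g (e j))) z)))) - z =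
        (∑ j : Fin M, psi0 g (p j) (πA (ιA (rTensor A (mulRight K (g (e j))) z)) -
            rTensor A (mulRight K (g (e j))) z)) +
          psi0 g ((∑ j : Fin M, lmulT (K := K) (e j) (p j)) - (1 : C) ⊗ₜ[K] (1 : C)) z := by
      simp only [map_sub, map_sum, LinearMap.sub_apply, LinearMap.sum_apply,
        psi0_one_one, psi0_lmulT_left, Finset.sum_sub_distrib]
      abel
    rw [key]
    refine Submodule.add_mem _ (Submodule.sum_mem _ fun j _ => ?_)
      (psi0_mem_relJ f g ht0 z)
    exact psi0_central_mem f g (hcent j) (hA5 _)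

end
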